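/- arXiv:2410.12503 — 6 statements merged into one kernel-verified Lean document; each statement's English description precedes it below -/
import Mathlib

section
/- The I-density topology on ℝ is not separable: for every countable set C ⊆ ℝ there exists a nonempty member U of T_I with U ∩ C = ∅; consequently no countable subset of ℝ is dense in (ℝ, T_I). -/
open MeasureTheory Filter Set
open scoped ENNReal

noncomputable section

/-- A nontrivial admissible ideal of subsets of ℕ: closed under subsets and
finite unions, contains every finite set, and does not contain ℕ itself. -/
structure AdmissibleIdeal : Type where
  carrier : Set (Set ℕ)
  subset_mem : ∀ ⦃A B : Set ℕ⦄, A ∈ carrier → B ⊆ A → B ∈ carrier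
  union_mem : ∀ ⦃A B : Set ℕ⦄, A ∈ carrier → B ∈ carrier → A ∪ B ∈ carrier
  finite_mem : ∀ A : Set ℕ, A.Finite → A ∈ carrier
  univ_not_mem : (Set.univ : Set ℕ) ∉ carrier

/-- The filter F(I) = {M ⊆ ℕ : ℕ \ M ∈ I} associated with the ideal I. -/
def AdmissibleIdeal.filter (I : AdmissibleIdeal) : Filter ℕ :=
  Filter.comk (· ∈ I.carrier) (I.finite_mem ∅ Set.finite_empty)
    (fun _t ht _s hs => I.subset_mem ht hs)
    (fun _s hs _t ht => I.union_mem hs ht)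

/-- A sequence of closed intervals admissible about the point `p`:
each `J n` is a closed interval containing `p`, and
`{n : 0 < λ(J n) < 1/n} ∈ F(I)`. -/
def AdmissibleSeq (I : AdmissibleIdeal) (p : ℝ) (J : ℕ → Set ℝ) : Prop :=
  (∀ n, ∃ a b : ℝ, a ≤ b ∧ J n = Set.Icc a b) ∧ (∀ n, p ∈ J n) ∧
    {n : ℕ | 0 < volume (J n) ∧ volume (J n) < (n : ℝ≥0∞)⁻¹} ∈ I.filter

/-- The sequence n ↦ λ(E ∩ J n)/λ(J n) (interpreted as 0 when λ(J n) = 0). -/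
def ratioSeq (E : Set ℝ) (J : ℕ → Set ℝ) : ℕ → ℝ :=
  fun n => (volume (E ∩ J n) / volume (J n)).toReal

/-- Upper I-density of `E` at `p`: sup over admissible sequences of the
limsup along `F(I)` of the measure ratios. -/
def upperIDensity (I : AdmissibleIdeal) (p : ℝ) (E : Set ℝ) : ℝ :=
  sSup {l : ℝ | ∃ J : ℕ → Set ℝ, AdmissibleSeq I p J ∧
    l = Filter.limsup (ratioSeq E J) I.filter}

/-- Lower I-density of `E` at `p`: inf over admissible sequences of the
liminf along `F(I)` of the measure ratios. -/
def lowerIDensity (I : AdmissibleIdeal) (p : ℝ) (E : Set ℝ) : ℝ :=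
  sInf {l : ℝ | ∃ J : ℕ → Set ℝ, AdmissibleSeq I p J ∧
    l = Filter.liminf (ratioSeq E J) I.filter}

/-- `C` is a measurable cover of `A`. -/
def IsMeasurableCover (C A : Set ℝ) : Prop :=
  MeasurableSet C ∧ A ⊆ C ∧
    ∀ F : Set ℝ, MeasurableSet F → F ⊆ C \ A → volume F = 0

/-- `A` is I-sparse at `x`, i.e. `A ∈ S_I(x)`. -/
def ISparseAt (I : AdmissibleIdeal) (A : Set ℝ) (x : ℝ) : Prop :=
  ∀ B : Set ℝ, MeasurableSet B → upperIDensity I x B < 1 →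
    ∀ C : Set ℝ, IsMeasurableCover C A → upperIDensity I x (C ∪ B) < 1

/-- The I-density topology T_I. -/
def IDensityTopology (I : AdmissibleIdeal) : Set (Set ℝ) :=
  {E | MeasurableSet E ∧ ∀ x ∈ E, lowerIDensity I x E = 1}

/-- The I-sparse set topology 𝒰. -/
def sparseTop (I : AdmissibleIdeal) : Set (Set ℝ) :=
  {E | ∀ x ∈ E, ISparseAt I Eᶜ x}

/-!
Every set of measure zero is closed in `T_I`: if `λ(N) = 0` then `ℝ \ N` fills every interval
up to a null set, so all the ratios `λ((ℝ \ N) ∩ J)/λ(J)` along an admissible sequence equal `1`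
as soon as `0 < λ(J) < ∞`, which holds `F(I)`-eventually. A countable set is null, and its
complement is nonempty because `ℝ` is uncountable.
-/

instance AdmissibleIdeal.filter_neBot (I : AdmissibleIdeal) : I.filter.NeBot := by
  rw [neBot_iff]
  intro h
  apply I.univ_not_mem
  have h_empty : (∅ : Set ℕ) ∈ I.filter := by simp [h]
  simpa [AdmissibleIdeal.filter, mem_comk] using h_empty

lemma AdmissibleSeq.volume_ne_top {I : AdmissibleIdeal} {p : ℝ} {J : ℕ → Set ℝ}
    (hJ : AdmissibleSeq I p J) (n : ℕ) : volume (J n) ≠ ∞ := by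
  obtain ⟨a, b, -, h_eq⟩ := hJ.1 n
  simp [h_eq, Real.volume_Icc]

lemma admissibleSeq_Icc_inv_succ (I : AdmissibleIdeal) (p : ℝ) :
    AdmissibleSeq I p (fun n => Icc p (p + ((n : ℝ) + 1)⁻¹)) := by
  have h_pos (n : ℕ) : (0 : ℝ) < ((n : ℝ) + 1)⁻¹ := by positivity
  refine ⟨fun n => ⟨_, _, by linarith [h_pos n], rfl⟩,
    fun n => ⟨le_rfl, by linarith [h_pos n]⟩, univ_mem' fun n => ?_⟩
  have h_vol : volume (Icc p (p + ((n : ℝ) + 1)⁻¹)) = ((n : ℝ≥0∞) + 1)⁻¹ := by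
    rw [Real.volume_Icc, add_sub_cancel_left, ENNReal.ofReal_inv_of_pos (by positivity)]
    norm_cast
  rw [mem_ofPred_eq, h_vol, ENNReal.inv_pos, ENNReal.inv_lt_inv]
  exact ⟨by simp, ENNReal.lt_add_right (ENNReal.natCast_ne_top n) one_ne_zero⟩

lemma ratioSeq_eventuallyEq_one {I : AdmissibleIdeal} {p : ℝ} {J : ℕ → Set ℝ} {E : Set ℝ}
    (hJ : AdmissibleSeq I p J) (hE : volume Eᶜ = 0) : ratioSeq E J =ᶠ[I.filter] 1 := by
  filter_upwards [hJ.2.2] with n hn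
  have h_inter : volume (E ∩ J n) = volume (J n) := by
    rw [inter_comm, ← sdiff_compl, measure_sdiff_null hE]
  simp [ratioSeq, h_inter, ENNReal.div_self hn.1.ne' (hJ.volume_ne_top n)]

lemma lowerIDensity_eq_one_of_measure_compl_eq_zero (I : AdmissibleIdeal) (p : ℝ) {E : Set ℝ}
    (hE : volume Eᶜ = 0) : lowerIDensity I p E = 1 := by
  have h_liminf {J : ℕ → Set ℝ} (hJ : AdmissibleSeq I p J) :
      liminf (ratioSeq E J) I.filter = 1 := by
    rw [liminf_congr (ratioSeq_eventuallyEq_one hJ hE), Pi.one_def, liminf_const]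
  have h_set : {l : ℝ | ∃ J, AdmissibleSeq I p J ∧ l = liminf (ratioSeq E J) I.filter} = {1} :=
    Subset.antisymm (fun _ ⟨_, hJ, hl⟩ => hl.trans (h_liminf hJ))
      fun _ hl => ⟨_, admissibleSeq_Icc_inv_succ I p,
        hl.trans (h_liminf (admissibleSeq_Icc_inv_succ I p)).symm⟩
  rw [lowerIDensity, h_set, csInf_singleton]

lemma compl_mem_IDensityTopology_of_measure_zero (I : AdmissibleIdeal) {N : Set ℝ}
    (hN : MeasurableSet N) (hN_null : volume N = 0) : Nᶜ ∈ IDensityTopology I :=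
  ⟨hN.compl, fun p _ => lowerIDensity_eq_one_of_measure_compl_eq_zero I p (by rwa [compl_compl])⟩

/-- The I-density topology is not separable: for every countable `C ⊆ ℝ` there is a
nonempty member of `T_I` disjoint from `C`; consequently no countable set is dense. -/
theorem IDensityTopology_not_separable (I : AdmissibleIdeal) (C : Set ℝ)
    (hC : C.Countable) :
    ∃ U ∈ IDensityTopology I, U.Nonempty ∧ U ∩ C = ∅ := by
  refine ⟨Cᶜ, compl_mem_IDensityTopology_of_measure_zero I hC.measurableSet
    (hC.measure_zero volume), ?_, compl_inter_self C⟩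
  rw [nonempty_compl]
  rintro rfl
  exact not_countable_univ hC
end
end

section
/- If A ⊆ ℝ is Lebesgue measurable, x ∈ ℝ, and the upper I-density satisfies I-d⁻(x, A) = 0, then A is I-sparse at x, i.e. A ∈ S_I(x). -/
open MeasureTheory Filter Set
open scoped ENNReal

noncomputable section

namespace AdmissibleIdeal

instance filter_neBot_s4 (I : AdmissibleIdeal) : I.filter.NeBot := by
  rw [Filter.neBot_iff]
  intro hbot
  have hempty : (∅ : Set ℕ) ∈ I.filter := hbot ▸ Filter.mem_bot
  have huniv : (∅ : Set ℕ)ᶜ ∈ I.carrier := hempty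
  exact I.univ_not_mem (Set.compl_empty ▸ huniv)

end AdmissibleIdeal

section MeasureRatio

variable {α : Type*} [MeasurableSpace α] (μ : Measure α) (E K : Set α)

lemma measure_inter_div_measure_le_one : μ (E ∩ K) / μ K ≤ 1 :=
  ENNReal.div_le_of_le_mul (by rw [one_mul]; exact measure_mono Set.inter_subset_right)

lemma measure_inter_div_measure_ne_top : μ (E ∩ K) / μ K ≠ ⊤ :=
  ne_top_of_le_ne_top ENNReal.one_ne_top (measure_inter_div_measure_le_one μ E K)

end MeasureRatio

section RatioSeq

variable (E F : Set ℝ) (J : ℕ → Set ℝ)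

lemma ratioSeq_nonneg (n : ℕ) : 0 ≤ ratioSeq E J n :=
  ENNReal.toReal_nonneg

lemma ratioSeq_le_one (n : ℕ) : ratioSeq E J n ≤ 1 := by
  simpa [ratioSeq] using
    ENNReal.toReal_mono ENNReal.one_ne_top (measure_inter_div_measure_le_one volume E (J n))

lemma ratioSeq_union_le (n : ℕ) :
    ratioSeq (E ∪ F) J n ≤ ratioSeq E J n + ratioSeq F J n := by
  have hdiv : volume ((E ∪ F) ∩ J n) / volume (J n) ≤
      volume (E ∩ J n) / volume (J n) + volume (F ∩ J n) / volume (J n) := by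
    rw [ENNReal.div_add_div_same, Set.union_inter_distrib_right]
    exact ENNReal.div_le_div_right (measure_union_le _ _) _
  have hE := measure_inter_div_measure_ne_top volume E (J n)
  have hF := measure_inter_div_measure_ne_top volume F (J n)
  have := ENNReal.toReal_mono (ENNReal.add_ne_top.mpr ⟨hE, hF⟩) hdiv
  rwa [ENNReal.toReal_add hE hF] at this

variable {E F} in
lemma ratioSeq_congr_ae (hEF : E =ᵐ[volume] F) : ratioSeq E J = ratioSeq F J := by
  funext n
  simp only [ratioSeq, measure_congr (hEF.inter (EventuallyEq.refl _ (J n)))]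

variable (I : AdmissibleIdeal)

lemma isBoundedUnder_le_ratioSeq : I.filter.IsBoundedUnder (· ≤ ·) (ratioSeq E J) :=
  Filter.isBoundedUnder_of ⟨1, ratioSeq_le_one E J⟩

lemma isBoundedUnder_ge_ratioSeq : I.filter.IsBoundedUnder (· ≥ ·) (ratioSeq E J) :=
  Filter.isBoundedUnder_of ⟨0, ratioSeq_nonneg E J⟩

lemma isCoboundedUnder_le_ratioSeq : I.filter.IsCoboundedUnder (· ≤ ·) (ratioSeq E J) :=
  (isBoundedUnder_ge_ratioSeq E J I).isCoboundedUnder_le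

lemma limsup_ratioSeq_nonneg : 0 ≤ limsup (ratioSeq E J) I.filter :=
  le_limsup_of_frequently_le (Frequently.of_forall (ratioSeq_nonneg E J))
    (isBoundedUnder_le_ratioSeq E J I)

lemma limsup_ratioSeq_le_one : limsup (ratioSeq E J) I.filter ≤ 1 :=
  limsup_le_of_le (isCoboundedUnder_le_ratioSeq E J I) (.of_forall (ratioSeq_le_one E J))

lemma limsup_ratioSeq_union_le :
    limsup (ratioSeq (E ∪ F) J) I.filter ≤
      limsup (ratioSeq E J) I.filter + limsup (ratioSeq F J) I.filter := by
  calc limsup (ratioSeq (E ∪ F) J) I.filter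
      ≤ limsup (ratioSeq E J + ratioSeq F J) I.filter :=
        limsup_le_limsup (.of_forall (ratioSeq_union_le E F J))
          (isCoboundedUnder_le_ratioSeq _ J I)
          (isBoundedUnder_le_add (isBoundedUnder_le_ratioSeq E J I)
            (isBoundedUnder_le_ratioSeq F J I))
    _ ≤ _ := limsup_add_le (isBoundedUnder_ge_ratioSeq E J I) (isBoundedUnder_le_ratioSeq E J I)
          (isCoboundedUnder_le_ratioSeq F J I) (isBoundedUnder_le_ratioSeq F J I)

end RatioSeq

section UpperIDensity

variable (I : AdmissibleIdeal) (p : ℝ)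

lemma upperIDensity_nonneg (E : Set ℝ) : 0 ≤ upperIDensity I p E :=
  Real.sSup_nonneg fun _ ⟨J, _, hl⟩ => hl ▸ limsup_ratioSeq_nonneg E J I

lemma limsup_ratioSeq_le_upperIDensity (E : Set ℝ) {J : ℕ → Set ℝ}
    (hJ : AdmissibleSeq I p J) :
    limsup (ratioSeq E J) I.filter ≤ upperIDensity I p E :=
  le_csSup ⟨1, fun _ ⟨J', _, hl⟩ => hl ▸ limsup_ratioSeq_le_one E J' I⟩ ⟨J, hJ, rfl⟩

lemma upperIDensity_union_le (E F : Set ℝ) :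
    upperIDensity I p (E ∪ F) ≤ upperIDensity I p E + upperIDensity I p F := by
  refine Real.sSup_le ?_ (add_nonneg (upperIDensity_nonneg I p E) (upperIDensity_nonneg I p F))
  rintro _ ⟨J, hJ, rfl⟩
  exact (limsup_ratioSeq_union_le E F J I).trans (add_le_add
    (limsup_ratioSeq_le_upperIDensity I p E hJ) (limsup_ratioSeq_le_upperIDensity I p F hJ))

lemma upperIDensity_congr_ae {E F : Set ℝ} (hEF : E =ᵐ[volume] F) :
    upperIDensity I p E = upperIDensity I p F := by
  simp only [upperIDensity, ratioSeq_congr_ae _ hEF]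

end UpperIDensity

lemma IsMeasurableCover.ae_eq {C A : Set ℝ} (hC : IsMeasurableCover C A) (hA : MeasurableSet A) :
    C =ᵐ[volume] A :=
  ae_eq_set.mpr ⟨hC.2.2 _ (hC.1.diff hA) subset_rfl, by simp [Set.sdiff_eq_empty.mpr hC.2.1]⟩

/-- A measurable set of upper I-density zero at `x` is I-sparse at `x`. -/
theorem iSparseAt_of_upperIDensity_zero (I : AdmissibleIdeal) (A : Set ℝ) (x : ℝ)
    (hA : MeasurableSet A) (h : upperIDensity I x A = 0) :
    ISparseAt I A x := by
  intro B _ hB C hC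
  calc upperIDensity I x (C ∪ B)
      = upperIDensity I x (A ∪ B) :=
        upperIDensity_congr_ae I x ((hC.ae_eq hA).union (EventuallyEq.refl _ B))
    _ ≤ upperIDensity I x A + upperIDensity I x B := upperIDensity_union_le I x A B
    _ < 1 := by rw [h, zero_add]; exact hB
end
end

section
/- Let c > 1, and for n ≥ 1 set a_n = c^{−(n²+1)} and b_n = c^{−n²}, and let E = ⋃_{n≥1} (a_n, b_n). Then the upper right density of E at 0 satisfies limsup_{h→0⁺} λ(E ∩ (0,h))/h ≥ 1 − 1/c; in particular it is strictly positive, so 0 is not a dispersion point of E. -/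
open MeasureTheory Filter Set
open scoped ENNReal

noncomputable section

/-
The intervals `(c^{-(n²+1)}, c^{-n²})` have length `(1 - 1/c) · c^{-n²}`, so at the right endpoints
`h = c^{-n²}`, which tend to `0`, the single interval `(h/c, h) ⊆ E` already fills the proportion
`1 - 1/c` of `(0, h)`.
-/

open Topology

lemma toReal_volume_inter_Ioo_zero_div_le_one (E : Set ℝ) {h : ℝ} (hh : 0 < h) :
    (volume (E ∩ Ioo 0 h)).toReal / h ≤ 1 := by
  refine div_le_one_of_le₀ ?_ hh.le
  calc (volume (E ∩ Ioo 0 h)).toReal ≤ (volume (Ioo 0 h)).toReal :=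
        ENNReal.toReal_mono measure_Ioo_lt_top.ne (measure_mono inter_subset_right)
    _ = h := by simp [hh.le]

lemma sub_div_le_toReal_volume_inter_Ioo_zero_div {E : Set ℝ} {a h : ℝ} (ha : 0 ≤ a)
    (hh : 0 < h) (hE : Ioo a h ⊆ E) :
    (h - a) / h ≤ (volume (E ∩ Ioo 0 h)).toReal / h := by
  gcongr
  calc h - a ≤ (volume (Ioo a h)).toReal := by
        rw [Real.volume_Ioo, ENNReal.toReal_ofReal']; exact le_max_left _ _
    _ ≤ (volume (E ∩ Ioo 0 h)).toReal :=
        ENNReal.toReal_mono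
          ((measure_mono inter_subset_right).trans_lt measure_Ioo_lt_top).ne
          (measure_mono (subset_inter hE (Ioo_subset_Ioo_left ha)))

theorem one_sub_le_limsup_toReal_volume_inter_Ioo_zero_div {E : Set ℝ} {θ : ℝ} (hθ : 0 ≤ θ)
    {b : ℕ → ℝ} (hb : Tendsto b atTop (𝓝[>] 0)) (hE : ∀ n, Ioo (θ * b n) (b n) ⊆ E) :
    1 - θ ≤ limsup (fun h => (volume (E ∩ Ioo 0 h)).toReal / h) (𝓝[>] 0) := by
  have hbdd : IsBoundedUnder (· ≤ ·) (𝓝[>] 0)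
      (fun h => (volume (E ∩ Ioo 0 h)).toReal / h) :=
    ⟨1, eventually_map.2 <| eventually_mem_nhdsWithin.mono fun h hh =>
      toReal_volume_inter_Ioo_zero_div_le_one E hh⟩
  refine le_limsup_of_frequently_le (hb.frequently ?_) hbdd
  refine ((hb.eventually eventually_mem_nhdsWithin).mono fun n (hn : 0 < b n) => ?_).frequently
  calc 1 - θ = (b n - θ * b n) / b n := by field_simp
    _ ≤ _ := sub_div_le_toReal_volume_inter_Ioo_zero_div (by positivity) hn (hE n)

/-- For `c > 1` and `E = ⋃_{n ≥ 1} (c^{-(n²+1)}, c^{-n²})`, the upper right density of `E`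
at `0` is at least `1 - 1/c`, hence strictly positive. -/
theorem sarkhel_example (c : ℝ) (hc : 1 < c) (E : Set ℝ)
    (hE : E = ⋃ n ∈ {n : ℕ | 1 ≤ n},
      Set.Ioo ((1 : ℝ) / c ^ (n ^ 2 + 1)) ((1 : ℝ) / c ^ (n ^ 2))) :
    1 - 1 / c ≤
      Filter.limsup (fun h : ℝ => (volume (E ∩ Set.Ioo 0 h)).toReal / h) (nhdsWithin 0 (Set.Ioi 0))
    ∧ 0 <
      Filter.limsup (fun h : ℝ => (volume (E ∩ Set.Ioo 0 h)).toReal / h)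
        (nhdsWithin 0 (Set.Ioi 0)) := by
  have hc₀ : 0 < c := one_pos.trans hc
  have hb : Tendsto (fun n : ℕ => (1 / c) ^ ((n + 1) ^ 2)) atTop (𝓝[>] 0) := by
    refine tendsto_nhdsWithin_iff.2 ⟨?_, Eventually.of_forall fun n => mem_Ioi.2 (by positivity)⟩
    exact (tendsto_pow_atTop_nhds_zero_of_lt_one (by positivity) ((div_lt_one hc₀).2 hc)).comp
      ((tendsto_pow_atTop two_ne_zero).comp (tendsto_add_atTop_nat 1))
  have hsub : ∀ n : ℕ, Ioo (1 / c * (1 / c) ^ ((n + 1) ^ 2)) ((1 / c) ^ ((n + 1) ^ 2)) ⊆ E := by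
    intro n
    rw [← pow_succ', one_div_pow, one_div_pow, hE]
    exact subset_biUnion_of_mem (u := fun k : ℕ => Ioo (1 / c ^ (k ^ 2 + 1)) (1 / c ^ k ^ 2))
      (show 1 ≤ n + 1 by omega)
  have hmain :=
    one_sub_le_limsup_toReal_volume_inter_Ioo_zero_div (by positivity : 0 ≤ 1 / c) hb hsub
  exact ⟨hmain, (sub_pos.2 ((div_lt_one hc₀).2 hc)).trans_le hmain⟩
end
end

section
/- If E₁ ⊆ ℝ and E₂ ⊆ ℝ are both I-sparse at x ∈ ℝ, then E₁ ∪ E₂ is I-sparse at x; that is, S_I(x) is closed under finite unions. -/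
open MeasureTheory Filter Set
open scoped ENNReal

noncomputable section

/-!
A measurable cover `C` of `E₁ ∪ E₂` splits as `C = C₁ ∪ C₂` with `Cᵢ` a measurable cover
of `Eᵢ`: take `C₁ = C ∩ T₁` and `C₂ = (C ∩ T₂) ∪ (C \ (T₁ ∪ T₂))`, where `Tᵢ` is a measurable
hull of `Eᵢ`; the last piece is null, being a measurable subset of `C \ (E₁ ∪ E₂)`.
Then `C ∪ B = C₂ ∪ (C₁ ∪ B)`, and sparseness of `E₁` and of `E₂` are applied in turn.
-/

theorem isMeasurableCover_toMeasurable (A : Set ℝ) :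
    IsMeasurableCover (toMeasurable volume A) A := by
  refine ⟨measurableSet_toMeasurable _ _, subset_toMeasurable _ _, fun F hF hFsub => ?_⟩
  have h := Measure.measure_toMeasurable_inter_of_sFinite (μ := volume) hF A
  rwa [inter_eq_self_of_subset_right fun y hy => (hFsub hy).1,
    disjoint_iff_inter_eq_empty.mp (disjoint_of_subset_right hFsub disjoint_sdiff_right),
    measure_empty] at h

namespace IsMeasurableCover

theorem inter {C A D : Set ℝ} (hC : IsMeasurableCover C A) (hD : MeasurableSet D)
    (hAD : A ⊆ D) : IsMeasurableCover (C ∩ D) A :=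
  ⟨hC.1.inter hD, subset_inter hC.2.1 hAD,
    fun F hF hFsub => hC.2.2 F hF fun _ hy => ⟨(hFsub hy).1.1, (hFsub hy).2⟩⟩

theorem union_null {C A N : Set ℝ} (hC : IsMeasurableCover C A) (hN : MeasurableSet N)
    (hN0 : volume N = 0) : IsMeasurableCover (C ∪ N) A := by
  refine ⟨hC.1.union hN, hC.2.1.trans subset_union_left, fun F hF hFsub => ?_⟩
  have hFC : volume (F ∩ C) = 0 :=
    hC.2.2 _ (hF.inter hC.1) fun _ hy => ⟨hy.2, (hFsub hy.1).2⟩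
  refine measure_mono_null (fun y hy => ?_) (measure_union_null hFC hN0)
  rcases (hFsub hy).1 with h | h
  exacts [Or.inl ⟨hy, h⟩, Or.inr h]

theorem measure_diff_eq_zero {C A D : Set ℝ} (hC : IsMeasurableCover C A)
    (hD : MeasurableSet D) (hAD : A ⊆ D) : volume (C \ D) = 0 :=
  hC.2.2 _ (hC.1.diff hD) (sdiff_subset_sdiff_right hAD)

theorem exists_union_eq {C A₁ A₂ : Set ℝ} (hC : IsMeasurableCover C (A₁ ∪ A₂)) :
    ∃ C₁ C₂, IsMeasurableCover C₁ A₁ ∧ IsMeasurableCover C₂ A₂ ∧ C₁ ∪ C₂ = C := by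
  set T₁ := toMeasurable volume A₁
  set T₂ := toMeasurable volume A₂
  have hT : MeasurableSet (T₁ ∪ T₂) :=
    (measurableSet_toMeasurable _ _).union (measurableSet_toMeasurable _ _)
  refine ⟨T₁ ∩ C, (T₂ ∩ C) ∪ (C \ (T₁ ∪ T₂)),
    (isMeasurableCover_toMeasurable A₁).inter hC.1 (subset_union_left.trans hC.2.1),
    ((isMeasurableCover_toMeasurable A₂).inter hC.1 (subset_union_right.trans hC.2.1)).union_null
      (hC.1.diff hT) (hC.measure_diff_eq_zero hT
        (union_subset_union (subset_toMeasurable _ _) (subset_toMeasurable _ _))), ?_⟩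
  ext y
  simp only [mem_union, mem_inter_iff, Set.mem_sdiff]
  tauto

end IsMeasurableCover

/-- S_I(x) is closed under finite unions. -/
theorem iSparseAt_union (I : AdmissibleIdeal) (E₁ E₂ : Set ℝ) (x : ℝ)
    (h₁ : ISparseAt I E₁ x) (h₂ : ISparseAt I E₂ x) :
    ISparseAt I (E₁ ∪ E₂) x := by
  intro B hB hBlt C hC
  obtain ⟨C₁, C₂, hC₁, hC₂, rfl⟩ := hC.exists_union_eq
  have h := h₂ (C₁ ∪ B) (hC₁.1.union hB) (h₁ B hB hBlt C₁ hC₁) C₂ hC₂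
  rwa [union_left_comm, ← union_assoc] at h
end
end

section
/- The I-sparse set topology is Hausdorff: for any two distinct points x, y ∈ ℝ there exist U, V ∈ 𝒰 with x ∈ U, y ∈ V and U ∩ V = ∅. -/
open MeasureTheory Filter Set
open scoped ENNReal

noncomputable section

/-
Every Euclidean open set belongs to `𝒰`, and ℝ is Hausdorff. If `E` is a neighbourhood of `x`
avoiding `A`, then admissible intervals about `x` eventually lie inside `E` (their lengths tend
to `0` along `F(I)`), while a measurable cover `C` of `A` meets `E` in a null set. Hence
`C ∪ B` and `B` have the same measure ratios along every admissible sequence, so adding `C`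
does not change the upper `I`-density.
-/

lemma AdmissibleIdeal.filter_le_atTop (I : AdmissibleIdeal) : I.filter ≤ atTop :=
  Nat.cofinite_eq_atTop ▸ fun _ hs => I.finite_mem _ (mem_cofinite.1 hs)

lemma AdmissibleSeq.eventually_subset {I : AdmissibleIdeal} {p : ℝ} {J : ℕ → Set ℝ}
    (hJ : AdmissibleSeq I p J) {U : Set ℝ} (hU : U ∈ nhds p) :
    ∀ᶠ n in I.filter, J n ⊆ U := by
  obtain ⟨hIcc, hpJ, hshort⟩ := hJ
  obtain ⟨ε, hε, hball⟩ := Metric.mem_nhds_iff.1 hU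
  have hinv_small : ∀ᶠ n : ℕ in I.filter, (n : ℝ≥0∞)⁻¹ < ENNReal.ofReal ε :=
    (ENNReal.tendsto_inv_nat_nhds_zero.mono_left I.filter_le_atTop).eventually
      (gt_mem_nhds (ENNReal.ofReal_pos.2 hε))
  filter_upwards [hshort, hinv_small] with n hn hinv
  obtain ⟨a, b, -, hJn⟩ := hIcc n
  have hlen : b - a < ε := by
    have hvol := hn.2.trans hinv
    rwa [hJn, Real.volume_Icc, ENNReal.ofReal_lt_ofReal_iff hε] at hvol
  intro z hz
  have hpJn := hpJ n
  rw [hJn] at hz hpJn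
  exact hball ((Real.dist_le_of_mem_Icc hz hpJn).trans_lt hlen)

lemma ratioSeq_congr_of_ae_eq_inter {E E' U : Set ℝ}
    (h : (E ∩ U : Set ℝ) =ᵐ[volume] (E' ∩ U : Set ℝ)) {J : ℕ → Set ℝ} {n : ℕ}
    (hJU : J n ⊆ U) : ratioSeq E J n = ratioSeq E' J n := by
  have hJ : J n = U ∩ J n := (inter_eq_right.2 hJU).symm
  simp only [ratioSeq]
  rw [hJ, ← inter_assoc, ← inter_assoc, measure_congr (ae_eq_set_inter h (ae_eq_refl (J n)))]

lemma upperIDensity_congr_of_ae_eq_inter (I : AdmissibleIdeal) {p : ℝ} {E E' U : Set ℝ}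
    (hU : U ∈ nhds p) (h : (E ∩ U : Set ℝ) =ᵐ[volume] (E' ∩ U : Set ℝ)) :
    upperIDensity I p E = upperIDensity I p E' := by
  have hlimsup : ∀ J, AdmissibleSeq I p J →
      limsup (ratioSeq E J) I.filter = limsup (ratioSeq E' J) I.filter := fun J hJ =>
    limsup_congr <| (hJ.eventually_subset hU).mono fun _ hJU => ratioSeq_congr_of_ae_eq_inter h hJU
  unfold upperIDensity
  congr 1
  ext l
  exact exists_congr fun J => ⟨fun ⟨hJ, hl⟩ => ⟨hJ, hl.trans (hlimsup J hJ)⟩,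
    fun ⟨hJ, hl⟩ => ⟨hJ, hl.trans (hlimsup J hJ).symm⟩⟩

lemma ISparseAt.of_compl_mem_nhds (I : AdmissibleIdeal) {A : Set ℝ} {x : ℝ}
    (hA : Aᶜ ∈ nhds x) : ISparseAt I A x := by
  intro B _ hB C hC
  obtain ⟨U, hUA, hUopen, hxU⟩ := mem_nhds_iff.1 hA
  have hCU_null : volume (C ∩ U) = 0 :=
    hC.2.2 _ (hC.1.inter hUopen.measurableSet) fun z hz => ⟨hz.1, hUA hz.2⟩
  have hae : ((C ∪ B) ∩ U : Set ℝ) =ᵐ[volume] (B ∩ U : Set ℝ) := by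
    rw [union_inter_distrib_right]
    exact union_ae_eq_right_of_ae_eq_empty (ae_eq_empty.2 hCU_null)
  rwa [upperIDensity_congr_of_ae_eq_inter I (hUopen.mem_nhds hxU) hae]

lemma IsOpen.mem_sparseTop (I : AdmissibleIdeal) {E : Set ℝ} (hE : IsOpen E) :
    E ∈ sparseTop I := fun _ hx =>
  ISparseAt.of_compl_mem_nhds I ((compl_compl E).symm ▸ hE.mem_nhds hx)

/-- The I-sparse set topology is Hausdorff. -/
theorem sparseTop_hausdorff (I : AdmissibleIdeal) (x y : ℝ) (hxy : x ≠ y) :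
    ∃ U ∈ sparseTop I, ∃ V ∈ sparseTop I, x ∈ U ∧ y ∈ V ∧ U ∩ V = ∅ := by
  obtain ⟨U, V, hU, hV, hxU, hyV, hUV⟩ := t2_separation hxy
  exact ⟨U, hU.mem_sparseTop I, V, hV.mem_sparseTop I, hxU, hyV, hUV.inter_eq⟩
end
end

section
/- The I-sparse set topology is not separable: for every countable set C ⊆ ℝ there exists a nonempty member U of 𝒰 with U ∩ C = ∅; consequently no countable subset of ℝ is dense in (ℝ, 𝒰). -/
open MeasureTheory Filter Set
open scoped ENNReal

noncomputable section

/-! A Lebesgue-null set is I-sparse at every point: a measurable cover of a null set is null, and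
adding a null set changes none of the ratios `λ(E ∩ J n)/λ(J n)`, hence no upper I-density.
A countable set `C` is null, so `Cᶜ ∈ 𝒰`, and `Cᶜ` is nonempty because ℝ is uncountable. -/

theorem IsMeasurableCover.measure_eq_zero {C A : Set ℝ} (hC : IsMeasurableCover C A)
    (hA : volume A = 0) : volume C = 0 := by
  obtain ⟨hCm, -, hnull⟩ := hC
  set T := toMeasurable volume A
  have hdiff : volume (C \ T) = 0 :=
    hnull _ (hCm.diff (measurableSet_toMeasurable _ _))
      (sdiff_subset_sdiff_right (subset_toMeasurable _ _))
  have hT : volume T = 0 := (measure_toMeasurable A).trans hA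
  exact measure_mono_null (subset_sdiff_union C T) (measure_union_null hdiff hT)

theorem ratioSeq_union_of_measure_zero {N : Set ℝ} (hN : volume N = 0) (E : Set ℝ)
    (J : ℕ → Set ℝ) : ratioSeq (N ∪ E) J = ratioSeq E J := by
  funext n
  have hNJ : (N ∩ J n : Set ℝ) =ᵐ[volume] (∅ : Set ℝ) :=
    ae_eq_empty.mpr (measure_inter_null_of_null_left _ hN)
  simp only [ratioSeq, union_inter_distrib_right,
    measure_congr (union_ae_eq_right_of_ae_eq_empty hNJ)]

theorem upperIDensity_union_of_measure_zero (I : AdmissibleIdeal) (x : ℝ) {N : Set ℝ}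
    (hN : volume N = 0) (E : Set ℝ) : upperIDensity I x (N ∪ E) = upperIDensity I x E := by
  simp only [upperIDensity, ratioSeq_union_of_measure_zero hN]

theorem iSparseAt_of_measure_zero (I : AdmissibleIdeal) {A : Set ℝ} (hA : volume A = 0)
    (x : ℝ) : ISparseAt I A x := fun _ _ hB _ hC => by
  rwa [upperIDensity_union_of_measure_zero I x (hC.measure_eq_zero hA)]

theorem compl_mem_sparseTop_of_measure_zero (I : AdmissibleIdeal) {N : Set ℝ}
    (hN : volume N = 0) : Nᶜ ∈ sparseTop I := fun x _ => by
  rw [compl_compl]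
  exact iSparseAt_of_measure_zero I hN x

/-- The I-sparse set topology is not separable: every countable `C ⊆ ℝ` misses some
nonempty member of 𝒰; consequently no countable set is dense in `(ℝ, 𝒰)`. -/
theorem sparseTop_not_separable (I : AdmissibleIdeal) (C : Set ℝ)
    (hC : C.Countable) :
    ∃ U ∈ sparseTop I, U.Nonempty ∧ U ∩ C = ∅ := by
  refine ⟨Cᶜ, compl_mem_sparseTop_of_measure_zero I (hC.measure_zero volume), ?_,
    compl_inter_self C⟩
  exact nonempty_compl.2 fun h => Cardinal.not_countable_real (h ▸ hC)
end
end
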